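/- arXiv:0902.0285 — 4 statements merged into one kernel-verified Lean document; each statement's English description precedes it below -/
import Mathlib

section
/- Let p₁,…,pₙ be nonzero mutually orthogonal projections in B(H) and define φ(x) = Σᵢ pᵢ x pᵢ. Then there exists an elementary operator ψ of length at most n−1 (i.e., ψ(x) = Σ_{k=1}^{n-1} aₖ x bₖ for some aₖ, bₖ ∈ B(H)) such that ‖φ − ψ‖ ≤ 1/n in the operator norm on bounded operators of B(H). -/
open scoped ComplexOrder

-- geometric-sum orthogonality for roots of unity
lemma rou_sum (n : ℕ) (hn : 0 < n) {ζ : ℂ} (hζ : IsPrimitiveRoot ζ n) (i j : Fin n) :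
    ∑ k ∈ Finset.range n, (ζ ^ (i : ℕ) * (starRingEnd ℂ) (ζ ^ (j : ℕ))) ^ k
      = if i = j then (n : ℂ) else 0 := by
  have habs : ‖ζ‖ = 1 := Complex.norm_eq_one_of_pow_eq_one hζ.pow_eq_one hn.ne'
  have hz0 : ζ ≠ 0 := by intro h; simp [h] at habs
  have habsj : ‖ζ ^ (j : ℕ)‖ = 1 := by
    rw [norm_pow, habs, one_pow]
  have hconj : (starRingEnd ℂ) (ζ ^ (j : ℕ)) = (ζ ^ (j : ℕ))⁻¹ :=
    (Complex.inv_eq_conj habsj).symm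
  rw [hconj]
  by_cases h : i = j
  · subst h
    simp [mul_inv_cancel₀ (pow_ne_zero _ hz0)]
  · have hw : (ζ ^ (i : ℕ) * (ζ ^ (j : ℕ))⁻¹) ≠ 1 := by
      intro h1
      have hz : ζ ^ (j : ℕ) ≠ 0 := pow_ne_zero _ hz0
      have : ζ ^ (i : ℕ) = ζ ^ (j : ℕ) := by
        field_simp at h1; exact h1
      exact h (Fin.ext (hζ.pow_inj i.isLt j.isLt this))
    have hwn : (ζ ^ (i : ℕ) * (ζ ^ (j : ℕ))⁻¹) ^ n = 1 := by
      rw [mul_pow, inv_pow, ← pow_mul, ← pow_mul, mul_comm (i:ℕ) n, mul_comm (j:ℕ) n,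
        pow_mul, pow_mul, hζ.pow_eq_one, one_pow, one_pow, inv_one, mul_one]
    rw [if_neg h, geom_sum_eq hw, hwn, sub_self, zero_div]

/-- If `p 1, …, p n` are nonzero mutually orthogonal projections in `B(H)` and
`φ(x) = ∑ i, p i * x * p i`, then there is an elementary operator of length at most `n - 1`
within distance `1/n` of `φ` (in the operator norm of maps on `B(H)`). -/
theorem stmt0 {H : Type*} [NormedAddCommGroup H] [InnerProductSpace ℂ H] [CompleteSpace H]
    (n : ℕ) (hn : 0 < n) (p : Fin n → (H →L[ℂ] H))
    (hne : ∀ i, p i ≠ 0)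
    (hproj : ∀ i, IsIdempotentElem (p i) ∧ IsSelfAdjoint (p i))
    (horth : ∀ i j, i ≠ j → p i * p j = 0) :
    ∃ a b : Fin (n - 1) → (H →L[ℂ] H),
      ∀ x : H →L[ℂ] H,
        ‖(∑ i, p i * x * p i) - ∑ k, a k * x * b k‖ ≤ (1 / (n : ℝ)) * ‖x‖ := by
  set ζ : ℂ := Complex.exp (2 * Real.pi * Complex.I / n) with hζdef
  have hζ : IsPrimitiveRoot ζ n := Complex.isPrimitiveRoot_exp n hn.ne'
  set u : ℕ → (H →L[ℂ] H) := fun k => ∑ j : Fin n, (ζ ^ ((j : ℕ) * k)) • p j with hu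
  have hstar : ∀ k, star (u k) = ∑ j : Fin n, ((starRingEnd ℂ) (ζ ^ ((j : ℕ) * k))) • p j := by
    intro k
    rw [hu]
    simp only [star_sum, star_smul]
    refine Finset.sum_congr rfl fun j _ => ?_
    rw [(hproj j).2.star_eq]
    rfl
  -- key identity
  have key : ∀ x : H →L[ℂ] H,
      ∑ k ∈ Finset.range n, u k * x * star (u k) = (n : ℂ) • ∑ i, p i * x * p i := by
    intro x
    have expand : ∀ k, u k * x * star (u k)
        = ∑ i : Fin n, ∑ j : Fin n, ((ζ ^ ((i : ℕ) * k)) * (starRingEnd ℂ) (ζ ^ ((j : ℕ) * k))) •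
            (p i * x * p j) := by
      intro k
      rw [hstar k, hu]
      simp only [Finset.sum_mul, Finset.mul_sum]
      rw [Finset.sum_comm]
      refine Finset.sum_congr rfl fun i _ => Finset.sum_congr rfl fun j _ => ?_
      simp only [smul_mul_assoc, mul_smul_comm, smul_smul]
      ring_nf
    calc ∑ k ∈ Finset.range n, u k * x * star (u k)
        = ∑ i : Fin n, ∑ j : Fin n, (∑ k ∈ Finset.range n,
            (ζ ^ ((i : ℕ) * k)) * (starRingEnd ℂ) (ζ ^ ((j : ℕ) * k))) • (p i * x * p j) := by
          simp only [expand]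
          rw [Finset.sum_comm]
          refine Finset.sum_congr rfl fun i _ => ?_
          rw [Finset.sum_comm]
          refine Finset.sum_congr rfl fun j _ => ?_
          rw [Finset.sum_smul]
      _ = ∑ i : Fin n, ∑ j : Fin n, ((if i = j then (n : ℂ) else 0) • (p i * x * p j)) := by
          refine Finset.sum_congr rfl fun i _ => Finset.sum_congr rfl fun j _ => ?_
          congr 1
          rw [← rou_sum n hn hζ i j]
          refine Finset.sum_congr rfl fun k _ => ?_
          rw [mul_pow, ← pow_mul, ← map_pow, ← pow_mul, mul_comm (i:ℕ) k, mul_comm (j:ℕ) k]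
      _ = (n : ℂ) • ∑ i, p i * x * p i := by
          rw [Finset.smul_sum]
          refine Finset.sum_congr rfl fun i _ => ?_
          simp [ite_smul]
  -- P := u 0 = ∑ p j
  have hu0 : u 0 = ∑ j, p j := by
    rw [hu]; simp
  set P : H →L[ℂ] H := ∑ j, p j with hP
  have hPsa : IsSelfAdjoint P := by
    rw [hP, IsSelfAdjoint, star_sum]
    exact Finset.sum_congr rfl fun j _ => (hproj j).2.star_eq
  have hPidem : P * P = P := by
    rw [hP, Finset.sum_mul]
    calc ∑ i, p i * ∑ j, p j = ∑ i, ∑ j, p i * p j := by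
          refine Finset.sum_congr rfl fun i _ => ?_; rw [Finset.mul_sum]
      _ = ∑ i, p i := by
          refine Finset.sum_congr rfl fun i _ => ?_
          rw [Finset.sum_eq_single i (fun j _ hj => horth i j (Ne.symm hj))
            (fun h => absurd (Finset.mem_univ i) h)]
          exact (hproj i).1
  have hPnorm : ‖P‖ ≤ 1 := by
    have h1 : ‖P‖ * ‖P‖ = ‖P‖ := by
      rw [← CStarRing.norm_star_mul_self (x := P), hPsa.star_eq, hPidem]
    nlinarith [norm_nonneg P]
  -- define a, b
  refine ⟨fun k => ((n : ℂ))⁻¹ • u ((k : ℕ) + 1), fun k => star (u ((k : ℕ) + 1)), fun x => ?_⟩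
  have hnc : (n : ℂ) ≠ 0 := by exact_mod_cast hn.ne'
  have hsum : ∑ k : Fin (n - 1), ((n : ℂ))⁻¹ • u ((k : ℕ) + 1) * x * star (u ((k : ℕ) + 1))
      = ((n : ℂ))⁻¹ • ∑ k ∈ Finset.range (n - 1), u (k + 1) * x * star (u (k + 1)) := by
    rw [Finset.smul_sum, ← Fin.sum_univ_eq_sum_range]
    refine Finset.sum_congr rfl fun k _ => ?_
    rw [smul_mul_assoc, smul_mul_assoc]
  have hrange : ∑ k ∈ Finset.range (n - 1), u (k + 1) * x * star (u (k + 1))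
      = (n : ℂ) • (∑ i, p i * x * p i) - u 0 * x * star (u 0) := by
    have hr : ∑ k ∈ Finset.range n, u k * x * star (u k)
        = (∑ k ∈ Finset.range (n - 1), u (k + 1) * x * star (u (k + 1)))
          + u 0 * x * star (u 0) := by
      conv_lhs => rw [← Nat.succ_pred_eq_of_pos hn]
      exact Finset.sum_range_succ' _ _
    rw [← key x, hr]; abel
  have hdiff : (∑ i, p i * x * p i) - ∑ k : Fin (n - 1),
      ((n : ℂ))⁻¹ • u ((k : ℕ) + 1) * x * star (u ((k : ℕ) + 1))
      = ((n : ℂ))⁻¹ • (P * x * P) := by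
    rw [hsum, hrange, smul_sub, smul_smul, inv_mul_cancel₀ hnc, one_smul, hu0,
      hPsa.star_eq]
    abel
  rw [hdiff]
  rw [norm_smul]
  have h1 : ‖((n : ℂ))⁻¹‖ = 1 / (n : ℝ) := by
    rw [norm_inv, Complex.norm_natCast, one_div]
  rw [h1]
  have h2 : ‖P * x * P‖ ≤ ‖x‖ := by
    calc ‖P * x * P‖ ≤ ‖P * x‖ * ‖P‖ := norm_mul_le _ _
      _ ≤ ‖P‖ * ‖x‖ * ‖P‖ := by
          gcongr; exact norm_mul_le _ _
      _ ≤ 1 * ‖x‖ * 1 := by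
          gcongr <;> exact hPnorm
      _ = ‖x‖ := by ring
  have hpos : (0:ℝ) ≤ 1 / (n : ℝ) := by positivity
  exact mul_le_mul_of_nonneg_left h2 hpos
end

section
/- Let H be a Hilbert space and κ : E(B(H)) → B(B(H)*, B(H)) the map sending an elementary operator ψ = Σᵢ aᵢ ⊗ bᵢ (acting by ψ(x) = Σᵢ aᵢ x bᵢ) to the operator κ(ψ)(ρ) = Σᵢ ρ(aᵢ) bᵢ for ρ ∈ B(H)*. Then κ is well-defined and contractive: ‖κ(ψ)‖ ≤ ‖ψ‖, where ‖ψ‖ is the operator norm of ψ on B(H). -/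
open scoped InnerProductSpace

/-- The map `κ` sending the elementary operator `ψ = ∑ aᵢ ⊗ bᵢ` on `B(H)` to the operator
`B(H)* → B(H)`, `ρ ↦ ∑ ρ(aᵢ) bᵢ`, is contractive: if `C` bounds the operator norm of `ψ`
(i.e. `‖ψ x‖ ≤ C ‖x‖` for all `x`), then `‖κ(ψ) ρ‖ ≤ C ‖ρ‖` for every `ρ ∈ B(H)*`. -/
theorem stmt12 {H : Type*} [NormedAddCommGroup H] [InnerProductSpace ℂ H] [CompleteSpace H]
    (n : ℕ) (a b : Fin n → (H →L[ℂ] H)) (C : ℝ)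
    (hC : ∀ x : H →L[ℂ] H, ‖∑ i, a i * x * b i‖ ≤ C * ‖x‖) :
    ∀ ρ : StrongDual ℂ (H →L[ℂ] H),
      ‖∑ i, ρ (a i) • b i‖ ≤ C * ‖ρ‖ := by
  intro ρ
  rcases subsingleton_or_nontrivial H with hH | hH
  · have h1 : (∑ i, ρ (a i) • b i) = 0 := Subsingleton.elim _ _
    have h2 : ρ = 0 := Subsingleton.elim _ _
    simp [h1, h2]
  have hC0 : 0 ≤ C := by
    have h := hC 1
    simp only [mul_one, norm_one] at h
    exact (norm_nonneg _).trans h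
  -- key estimate for S = ∑ ⟪η, bᵢ ξ⟫ • aᵢ
  have hS : ∀ (ξ η : H), ‖∑ i, (⟪η, b i ξ⟫_ℂ) • a i‖ ≤ C * ‖ξ‖ * ‖η‖ := by
    intro ξ η
    refine ContinuousLinearMap.opNorm_le_bound _ (by positivity) fun v => ?_
    set x : H →L[ℂ] H := (innerSL ℂ η).smulRight v with hx_def
    have hx : ‖x‖ ≤ ‖η‖ * ‖v‖ := by
      calc ‖x‖ ≤ ‖innerSL ℂ η‖ * ‖v‖ := ContinuousLinearMap.norm_smulRight_apply _ _ |>.le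
        _ = ‖η‖ * ‖v‖ := by rw [innerSL_apply_norm]
    have key : (∑ i, (⟪η, b i ξ⟫_ℂ) • a i) v = (∑ i, a i * x * b i) ξ := by
      simp [ContinuousLinearMap.sum_apply, ContinuousLinearMap.mul_apply, hx_def,
        ContinuousLinearMap.smulRight_apply, map_smul]
    rw [key]
    calc ‖(∑ i, a i * x * b i) ξ‖ ≤ ‖∑ i, a i * x * b i‖ * ‖ξ‖ :=
          ContinuousLinearMap.le_opNorm _ _
      _ ≤ (C * ‖x‖) * ‖ξ‖ := mul_le_mul_of_nonneg_right (hC x) (norm_nonneg _)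
      _ ≤ (C * (‖η‖ * ‖v‖)) * ‖ξ‖ := by
          have : C * ‖x‖ ≤ C * (‖η‖ * ‖v‖) := mul_le_mul_of_nonneg_left hx hC0
          exact mul_le_mul_of_nonneg_right this (norm_nonneg _)
      _ = C * ‖ξ‖ * ‖η‖ * ‖v‖ := by ring
  refine ContinuousLinearMap.opNorm_le_bound _ (by positivity) fun ξ => ?_
  set u : H := (∑ i, ρ (a i) • b i) ξ with hu
  have h1 : (⟪u, (∑ i, ρ (a i) • b i) ξ⟫_ℂ) = ρ (∑ i, (⟪u, b i ξ⟫_ℂ) • a i) := by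
    simp only [ContinuousLinearMap.sum_apply, ContinuousLinearMap.smul_apply, inner_sum,
      inner_smul_right, map_sum, map_smul, smul_eq_mul]
    exact Finset.sum_congr rfl fun i _ => mul_comm _ _
  have h2 : ‖u‖ ^ 2 ≤ C * ‖ρ‖ * ‖ξ‖ * ‖u‖ := by
    have hnorm : (‖u‖ : ℝ) ^ 2 = ‖(⟪u, u⟫_ℂ)‖ := by
      rw [inner_self_eq_norm_sq_to_K]; simp [sq_abs]
    calc ‖u‖ ^ 2 = ‖(⟪u, (∑ i, ρ (a i) • b i) ξ⟫_ℂ)‖ := by rw [← hu, hnorm]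
      _ = ‖ρ (∑ i, (⟪u, b i ξ⟫_ℂ) • a i)‖ := by rw [h1]
      _ ≤ ‖ρ‖ * ‖∑ i, (⟪u, b i ξ⟫_ℂ) • a i‖ := ContinuousLinearMap.le_opNorm _ _
      _ ≤ ‖ρ‖ * (C * ‖ξ‖ * ‖u‖) := mul_le_mul_of_nonneg_left (hS ξ u) (norm_nonneg _)
      _ = C * ‖ρ‖ * ‖ξ‖ * ‖u‖ := by ring
  rcases eq_or_lt_of_le (norm_nonneg u) with h0 | h0
  · rw [← h0]; positivity
  · have h3 : ‖u‖ * ‖u‖ ≤ (C * ‖ρ‖ * ‖ξ‖) * ‖u‖ := by nlinarith [h2]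
    exact le_of_mul_le_mul_right h3 h0
end

section
/- For each m ∈ ℕ there exists n(m) ∈ ℕ such that: for every Hilbert space H and every map θ(x) = Σ_{i=1}^{n} eᵢ x fᵢ on B(H) with n ≥ n(m), where eᵢ, fᵢ ∈ B(H)₊ are norm-one elements satisfying eᵢeⱼ = 0 = fᵢfⱼ for i ≠ j, the distance from θ to the set of elementary operators of length at most m is at least 1/5. -/
local notation "⟪" x ", " y "⟫" => @inner ℂ _ _ x y

open ContinuousLinearMap in
/-- If `p` is self-adjoint of norm 1 and `q * p = 0` then `‖p - q‖ ≥ 1`. -/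
lemma sep_aux {H : Type} [NormedAddCommGroup H] [InnerProductSpace ℂ H] [CompleteSpace H]
    (p q : H →L[ℂ] H) (hp : IsSelfAdjoint p) (hqp : q * p = 0) (hnp : ‖p‖ = 1) :
    (1 : ℝ) ≤ ‖p - q‖ := by
  refine le_of_forall_lt fun r hr => ?_
  rcases lt_or_ge r 0 with h0 | h0
  · exact lt_of_lt_of_le h0 (norm_nonneg _)
  · obtain ⟨v, hv1, hvp⟩ := p.exists_lt_apply_of_lt_opNorm (hnp ▸ hr)
    have hpos : (0:ℝ) < ‖p v‖ := lt_of_le_of_lt h0 hvp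
    have key : ‖p v‖ * ‖p v‖ ≤ ‖p - q‖ * ‖p v‖ := by
      have h1 : (⟪p v, p v⟫) = ⟪p (p v), v⟫ := (hp.isSymmetric (p v) v).symm
      have h2 : ‖p v‖ * ‖p v‖ = ‖(⟪p (p v), v⟫)‖ := by
        rw [← h1, inner_self_eq_norm_sq_to_K]; simp [sq]
      have h3 : ‖(⟪p (p v), v⟫)‖ ≤ ‖p (p v)‖ * ‖v‖ := norm_inner_le_norm _ _
      have h4 : p (p v) = (p - q) (p v) := by
        have : q (p v) = (q * p) v := rfl
        simp [sub_apply, this, hqp]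
      have h5 : ‖(p - q) (p v)‖ ≤ ‖p - q‖ * ‖p v‖ := le_opNorm _ _
      calc ‖p v‖ * ‖p v‖ = ‖(⟪p (p v), v⟫)‖ := h2
        _ ≤ ‖p (p v)‖ * ‖v‖ := h3
        _ ≤ ‖p (p v)‖ * 1 := by
            have := norm_nonneg (p (p v))
            nlinarith [hv1.le]
        _ = ‖(p - q) (p v)‖ := by rw [mul_one, h4]
        _ ≤ ‖p - q‖ * ‖p v‖ := h5
    have := le_of_mul_le_mul_right key hpos
    exact lt_of_lt_of_le hvp this

set_option maxHeartbeats 1000000 in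
/-- Lemma 2.3: for each `m` there is `n m` such that for every Hilbert space `H` and every map
`θ(x) = ∑_{i<n} eᵢ x fᵢ` on `B(H)` with `n ≥ n m`, where the `eᵢ, fᵢ` are mutually orthogonal
positive norm-one operators, the distance from `θ` to the set of elementary operators of
length at most `m` is at least `1/5`; i.e. every elementary operator `ψ(x) = ∑_{j<m} aⱼ x bⱼ`
satisfies `‖θ - ψ‖ ≥ 1/5` in the operator norm. -/
theorem stmt13 (m : ℕ) :
    ∃ nm : ℕ, ∀ (H : Type) [NormedAddCommGroup H] [InnerProductSpace ℂ H] [CompleteSpace H],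
      ∀ (n : ℕ), nm ≤ n →
      ∀ e f : Fin n → (H →L[ℂ] H),
        (∀ i, (e i).IsPositive) → (∀ i, (f i).IsPositive) →
        (∀ i, ‖e i‖ = 1) → (∀ i, ‖f i‖ = 1) →
        (∀ i j, i ≠ j → e i * e j = 0) → (∀ i j, i ≠ j → f i * f j = 0) →
        ∀ a b : Fin m → (H →L[ℂ] H), ∀ c : ℝ,
          (∀ x : H →L[ℂ] H,
            ‖(∑ i, e i * x * f i) - ∑ j, a j * x * b j‖ ≤ c * ‖x‖) →
          (1 : ℝ) / 5 ≤ c := by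
  classical
  refine ⟨5 ^ (2 * m) + 1, ?_⟩
  intro H _ _ _ n hn e f he hf hne hnf heo hfo a b c hc
  by_contra hcon
  push_neg at hcon
  have hn1 : 0 < n := lt_of_lt_of_le (Nat.succ_pos _) hn
  have hc0 : 0 ≤ c := by
    have h := hc (e ⟨0, hn1⟩)
    have h2 : (0:ℝ) ≤ c * ‖e ⟨0, hn1⟩‖ := le_trans (norm_nonneg _) h
    rw [hne ⟨0, hn1⟩] at h2; linarith
  -- choose almost norming vectors for the f k
  have hexists : ∀ k : Fin n, ∃ η : H, ‖η‖ < 1 ∧ max (5*c) (1/2) < ‖f k η‖ := by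
    intro k
    exact (f k).exists_lt_apply_of_lt_opNorm
      (by rw [hnf k]; exact max_lt (by linarith) (by norm_num))
  choose η hη1 hη2 using hexists
  set w : Fin n → H := fun k => f k (η k) with hw
  have hwpos : ∀ k, 0 < ‖w k‖ := by
    intro k
    have h1 : (1:ℝ)/2 ≤ max (5*c) (1/2) := le_max_right _ _
    have := hη2 k; simp only [hw]; linarith
  have hw5c : ∀ k, 5 * c < ‖w k‖ := by
    intro k
    have h1 : 5*c ≤ max (5*c) (1/2) := le_max_left _ _
    have := hη2 k; simp only [hw]; linarith
  have hw1 : ∀ k, ‖w k‖ ≤ 1 := by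
    intro k
    calc ‖f k (η k)‖ ≤ ‖f k‖ * ‖η k‖ := (f k).le_opNorm _
      _ ≤ 1 := by rw [hnf k, one_mul]; exact (hη1 k).le
  set G : Fin n → (H →L[ℂ] H) := fun k => ∑ j, (⟪w k, b j (η k)⟫) • a j with hG
  -- key estimate
  have key : ∀ k, ‖(((‖w k‖:ℂ)^2) • e k - G k)‖ ≤ c * ‖w k‖ := by
    intro k
    refine ContinuousLinearMap.opNorm_le_bound _ (mul_nonneg hc0 (norm_nonneg _)) fun u => ?_
    set x : H →L[ℂ] H := (innerSL ℂ (w k)).smulRight u with hx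
    have hxval : ∀ v : H, x v = (⟪w k, v⟫) • u := fun v => rfl
    have hxnorm : ‖x‖ = ‖w k‖ * ‖u‖ := by
      rw [hx, ContinuousLinearMap.norm_smulRight_apply, innerSL_apply_norm]
    have hΘ : (∑ i, e i * x * f i) (η k) = ((‖w k‖:ℂ)^2) • (e k u) := by
      rw [ContinuousLinearMap.sum_apply, Finset.sum_eq_single k]
      · have : (e k * x * f k) (η k) = e k (x (f k (η k))) := rfl
        rw [this, hxval, map_smul, inner_self_eq_norm_sq_to_K]
        norm_cast
      · intro i _ hik
        have h0 : (e i * x * f i) (η k) = e i (x (f i (η k))) := rfl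
        have hz : ⟪w k, f i (η k)⟫ = 0 := by
          have h1 : (⟪f k (η k), f i (η k)⟫) = ⟪η k, f k (f i (η k))⟫ :=
            (hf k).isSelfAdjoint.isSymmetric _ _
          have h2 : f k (f i (η k)) = (f k * f i) (η k) := rfl
          simp only [hw]
          rw [h1, h2, hfo k i (Ne.symm hik)]
          simp
        rw [h0, hxval, hz]
        simp
      · simp
    have hΨ : (∑ j, a j * x * b j) (η k) = (G k) u := by
      rw [ContinuousLinearMap.sum_apply, hG, ContinuousLinearMap.sum_apply]
      refine Finset.sum_congr rfl fun j _ => ?_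
      have h0 : (a j * x * b j) (η k) = a j (x (b j (η k))) := rfl
      rw [h0, hxval, map_smul]
      rfl
    have happ : ‖((∑ i, e i * x * f i) - ∑ j, a j * x * b j) (η k)‖ ≤ (c * ‖x‖) * ‖η k‖ :=
      le_trans (ContinuousLinearMap.le_opNorm _ _)
        (mul_le_mul_of_nonneg_right (hc x) (norm_nonneg _))
    calc ‖(((‖w k‖:ℂ)^2) • e k - G k) u‖
        = ‖((∑ i, e i * x * f i) - ∑ j, a j * x * b j) (η k)‖ := by
          rw [ContinuousLinearMap.sub_apply, ContinuousLinearMap.sub_apply, hΘ, hΨ,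
            ContinuousLinearMap.smul_apply]
      _ ≤ (c * ‖x‖) * ‖η k‖ := happ
      _ ≤ c * ‖w k‖ * ‖u‖ := by
          rw [hxnorm]
          have h1 : ‖η k‖ ≤ 1 := (hη1 k).le
          have h2 : (0:ℝ) ≤ c * (‖w k‖ * ‖u‖) := by positivity
          nlinarith [norm_nonneg (η k)]
  -- the approximants
  set hh : Fin n → (H →L[ℂ] H) := fun k => (((‖w k‖:ℂ)^2)⁻¹) • G k with hhh
  have hek : ∀ k, ‖e k - hh k‖ < 1/5 := by
    intro k
    have hwne : ((‖w k‖:ℂ)^2) ≠ 0 := by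
      have : ((‖w k‖:ℝ):ℂ) ≠ 0 := by exact_mod_cast (hwpos k).ne'
      exact pow_ne_zero 2 this
    have hrw : e k - hh k = (((‖w k‖:ℂ)^2)⁻¹) • (((‖w k‖:ℂ)^2) • e k - G k) := by
      rw [smul_sub, smul_smul, inv_mul_cancel₀ hwne, one_smul]
    rw [hrw, norm_smul]
    have hn1 : ‖(((‖w k‖:ℂ)^2)⁻¹)‖ = (‖w k‖^2)⁻¹ := by
      rw [norm_inv, norm_pow, Complex.norm_real, Real.norm_of_nonneg (norm_nonneg _)]
    rw [hn1]
    have h1 : (‖w k‖^2)⁻¹ * ‖((‖w k‖:ℂ)^2) • e k - G k‖ ≤ (‖w k‖^2)⁻¹ * (c * ‖w k‖) :=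
      mul_le_mul_of_nonneg_left (key k) (by positivity)
    have h2 : (‖w k‖^2)⁻¹ * (c * ‖w k‖) = c / ‖w k‖ := by
      field_simp [(hwpos k).ne']
    have h3 : c / ‖w k‖ < 1/5 := by
      rw [div_lt_iff₀ (hwpos k)]
      linarith [hw5c k]
    calc (‖w k‖^2)⁻¹ * ‖((‖w k‖:ℂ)^2) • e k - G k‖ ≤ c / ‖w k‖ := by rw [← h2]; exact h1
      _ < 1/5 := h3
  -- separation of the e's
  have hsep : ∀ i k : Fin n, i ≠ k → (1:ℝ) ≤ ‖e i - e k‖ := fun i k hik =>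
    sep_aux (e i) (e k) (he i).isSelfAdjoint (heo k i (Ne.symm hik)) (hne i)
  have hhsep : ∀ i k : Fin n, i ≠ k → (3:ℝ)/5 < ‖hh i - hh k‖ := by
    intro i k hik
    have t1 := hek i
    have t2 := hek k
    have tri : ‖e i - e k‖ ≤ ‖e i - hh i‖ + ‖hh i - hh k‖ + ‖hh k - e k‖ := by
      have : e i - e k = (e i - hh i) + (hh i - hh k) + (hh k - e k) := by abel
      rw [this]
      exact le_trans (norm_add_le _ _) (by linarith [norm_add_le (e i - hh i) (hh i - hh k)])
    have t3 : ‖hh k - e k‖ = ‖e k - hh k‖ := norm_sub_rev _ _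
    have := hsep i k hik
    linarith
  have hhbound : ∀ k, ‖hh k‖ < 6/5 := by
    intro k
    have : ‖hh k‖ ≤ ‖e k‖ + ‖hh k - e k‖ := by
      have h := norm_add_le (e k) (hh k - e k)
      simpa using h
    rw [hne k, norm_sub_rev] at this
    linarith [hek k]
  -- membership in the span of the a's
  set V : Submodule ℂ (H →L[ℂ] H) := Submodule.span ℂ (Set.range a) with hV
  have hmem : ∀ k, hh k ∈ V := by
    intro k
    refine Submodule.smul_mem _ _ (Submodule.sum_mem _ fun j _ => Submodule.smul_mem _ _ ?_)
    exact Submodule.subset_span ⟨j, rfl⟩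
  -- packing argument
  haveI : FiniteDimensional ℂ V := FiniteDimensional.span_of_finite ℂ (Set.finite_range a)
  haveI : FiniteDimensional ℝ V := FiniteDimensional.trans ℝ ℂ V
  have hrk : Module.finrank ℝ V ≤ 2 * m := by
    have h1 : Module.finrank ℝ ↥V = 2 * Module.finrank ℂ ↥V :=
      finrank_real_of_complex ↥V
    have h2 : Module.finrank ℂ V ≤ m := by
      have := finrank_range_le_card (R := ℂ) a
      simpa [Set.finrank, hV] using this
    rw [h1]
    omega
  have hc53 : ‖((5:ℂ)/3)‖ = 5/3 := by
    rw [norm_div]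
    simp
  set P : Fin n → V := fun k => ⟨((5:ℂ)/3) • hh k, Submodule.smul_mem _ _ (hmem k)⟩ with hP
  have hPinj : Function.Injective P := by
    intro i k hik
    by_contra hne'
    have : ((5:ℂ)/3) • hh i = ((5:ℂ)/3) • hh k := congrArg Subtype.val hik
    have heq : hh i = hh k := by
      have h53 : ((5:ℂ)/3) ≠ 0 := by norm_num
      exact smul_right_injective _ h53 this
    have := hhsep i k hne'
    rw [heq, sub_self, norm_zero] at this
    linarith
  set s : Finset V := Finset.univ.image P with hs
  have hcard : s.card = n := by
    rw [hs, Finset.card_image_of_injective _ hPinj, Finset.card_univ, Fintype.card_fin]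
  have hb1 : ∀ x ∈ s, ‖x‖ ≤ 2 := by
    intro x hx
    rw [hs, Finset.mem_image] at hx
    obtain ⟨k, -, rfl⟩ := hx
    rw [Submodule.coe_norm]
    have hval : ((P k : V) : H →L[ℂ] H) = ((5:ℂ)/3) • hh k := by
      simp only [hP]
    rw [hval, norm_smul, hc53]
    linarith [hhbound k]
  have hb2 : ∀ x ∈ s, ∀ y ∈ s, x ≠ y → (1:ℝ) ≤ ‖x - y‖ := by
    intro x hx y hy hxy
    rw [hs, Finset.mem_image] at hx hy
    obtain ⟨i, -, rfl⟩ := hx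
    obtain ⟨k, -, rfl⟩ := hy
    have hik : i ≠ k := fun h => hxy (by rw [h])
    rw [Submodule.coe_norm]
    have hval : ((P i - P k : V) : H →L[ℂ] H) = ((5:ℂ)/3) • (hh i - hh k) := by
      push_cast [hP]
      rw [smul_sub]
    rw [hval, norm_smul, hc53]
    linarith [hhsep i k hik]
  have hfin := Besicovitch.card_le_of_separated s hb1 hb2
  have h5 : (5:ℕ) ^ Module.finrank ℝ V ≤ 5 ^ (2 * m) :=
    Nat.pow_le_pow_right (by norm_num) hrk
  rw [hcard] at hfin
  omega
end

section
/- Let Δ be a locally compact Hausdorff space, A = C₀(Δ, Mₙ(ℂ)), Z₀ = C₀(Δ) its center (acting by scalar multiplication), and Z = C_b(Δ). If φ : A → A is a bounded Z₀-bimodule map (equivalently, a bounded map preserving all the ideals J_t = {f : f(t)=0}), then φ is an elementary operator with coefficients in Mₙ(Z) = C_b(Δ, Mₙ(ℂ)): there exist c^{jl}_{ki} ∈ C_b(Δ) such that φ([z_{ij}]) = Σ_{k,l,r,s} c^{rl}_{ks} e_{ks} [z_{ij}] e_{rl}. In particular φ is an elementary operator of length at most n⁴ over the multiplier algebra of A.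 -/
open scoped ZeroAtInfty BoundedContinuousFunction

attribute [local instance] Matrix.normedAddCommGroup Matrix.normedSpace

instance matrixNormedTopologicalSpace {m n α : Type*} [Fintype m] [Fintype n] [NormedAddCommGroup α] :
    TopologicalSpace (Matrix m n α) :=
  (Matrix.normedAddCommGroup : NormedAddCommGroup (Matrix m n α)).toUniformSpace.toTopologicalSpace

private lemma stdBasis_conj_aux {n : ℕ} (k s r l : Fin n)
    (X : Matrix (Fin n) (Fin n) ℂ) :
    Matrix.single k s (1 : ℂ) * X * Matrix.single r l (1 : ℂ) =
      X s r • Matrix.single k l (1 : ℂ) := by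
  ext a b
  by_cases ha : a = k <;> by_cases hb : b = l <;>
    simp [ha, hb, Matrix.single, Matrix.mul_apply, Finset.sum_ite_eq,
      Ne.symm, mul_comm]

/-- For `A = C₀(Δ, Mₙ(ℂ))` over a locally compact Hausdorff space `Δ`, every bounded linear
map `φ : A → A` preserving all the ideals `J_t = {f : f t = 0}` (equivalently, every bounded
`C₀(Δ)`-bimodule map) is an elementary operator with coefficients in `Mₙ(C_b(Δ))`: there are
bounded continuous scalar functions `c r l k s` with
`(φ f) t = ∑_{k,l,r,s} c r l k s t • (e k s * f t * e r l)`.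
In particular `φ` has length at most `n⁴` over the multiplier algebra of `A`. -/
theorem stmt15 (Δ : Type*) [TopologicalSpace Δ] [LocallyCompactSpace Δ] [T2Space Δ]
    (n : ℕ)
    (φ : C₀(Δ, Matrix (Fin n) (Fin n) ℂ) →L[ℂ] C₀(Δ, Matrix (Fin n) (Fin n) ℂ))
    (hφ : ∀ (t : Δ) (f : C₀(Δ, Matrix (Fin n) (Fin n) ℂ)), f t = 0 → φ f t = 0) :
    ∃ c : Fin n → Fin n → Fin n → Fin n → (Δ →ᵇ ℂ),
      ∀ (f : C₀(Δ, Matrix (Fin n) (Fin n) ℂ)) (t : Δ),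
        φ f t = ∑ k, ∑ l, ∑ r, ∑ s,
          c r l k s t • (Matrix.single k s (1 : ℂ) * f t *
            Matrix.single r l (1 : ℂ)) := by
  classical
  -- dependence only on the value at `t`
  have dep : ∀ (t : Δ) (f g : C₀(Δ, Matrix (Fin n) (Fin n) ℂ)),
      f t = g t → φ f t = φ g t := by
    intro t f g h
    have h0 : (f - g) t = 0 := by
      simp [ZeroAtInftyContinuousMap.sub_apply, h]
    have := hφ t (f - g) h0
    rw [map_sub] at this
    simpa [ZeroAtInftyContinuousMap.sub_apply, sub_eq_zero] using this
  -- choice of local sections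
  have key : ∀ (t : Δ) (m : Matrix (Fin n) (Fin n) ℂ),
      ∃ f : C₀(Δ, Matrix (Fin n) (Fin n) ℂ),
        (∀ᶠ x in nhds t, f x = m) ∧ ‖f‖ ≤ ‖m‖ := by
    intro t m
    obtain ⟨K, hKc, hKn⟩ := exists_compact_mem_nhds t
    obtain ⟨g, hg1, -, hgsupp, hg01⟩ :=
      exists_continuous_one_zero_of_isCompact hKc isClosed_empty (Set.disjoint_empty _)
    have hsupp : HasCompactSupport (fun x => g x • m) := by
      apply HasCompactSupport.mono hgsupp
      intro x hx
      simp only [Function.mem_support, ne_eq] at hx ⊢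
      intro h0
      exact hx (by simp [h0])
    refine ⟨⟨⟨fun x => g x • m, (map_continuous g).smul continuous_const⟩,
        hsupp.is_zero_at_infty⟩, ?_, ?_⟩
    · filter_upwards [hKn] with x hx
      simp [hg1 hx]
    · rw [← ZeroAtInftyContinuousMap.norm_toBCF_eq_norm]
      apply BoundedContinuousFunction.norm_le (norm_nonneg m) |>.mpr
      intro x
      calc ‖g x • m‖ = ‖g x‖ * ‖m‖ := norm_smul _ _
        _ ≤ 1 * ‖m‖ := by
            apply mul_le_mul_of_nonneg_right _ (norm_nonneg m)
            rw [Real.norm_eq_abs, abs_le]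
            exact ⟨by linarith [(hg01 x).1], (hg01 x).2⟩
        _ = ‖m‖ := one_mul _
  -- the local operator
  set F : Δ → Matrix (Fin n) (Fin n) ℂ → C₀(Δ, Matrix (Fin n) (Fin n) ℂ) :=
    fun t m => (key t m).choose with hF
  have hFev : ∀ t m, ∀ᶠ x in nhds t, F t m x = m := fun t m => (key t m).choose_spec.1
  have hFt : ∀ t m, F t m t = m := fun t m => (hFev t m).self_of_nhds
  have hFnorm : ∀ t m, ‖F t m‖ ≤ ‖m‖ := fun t m => (key t m).choose_spec.2
  set T : Δ → Matrix (Fin n) (Fin n) ℂ → Matrix (Fin n) (Fin n) ℂ :=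
    fun t m => φ (F t m) t with hTdef
  have hT : ∀ (t : Δ) (f : C₀(Δ, Matrix (Fin n) (Fin n) ℂ)), φ f t = T t (f t) := by
    intro t f
    exact dep t f (F t (f t)) (by rw [hFt])
  have Tadd : ∀ t m m', T t (m + m') = T t m + T t m' := by
    intro t m m'
    have h1 : φ (F t (m + m')) t = φ (F t m + F t m') t := by
      apply dep
      simp [hFt, ZeroAtInftyContinuousMap.add_apply]
    simp only [hTdef, h1, map_add, ZeroAtInftyContinuousMap.add_apply]
  have Tsmul : ∀ (t : Δ) (a : ℂ) m, T t (a • m) = a • T t m := by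
    intro t a m
    have h1 : φ (F t (a • m)) t = φ (a • F t m) t := by
      apply dep
      simp [hFt, ZeroAtInftyContinuousMap.smul_apply]
    simp only [hTdef, h1, map_smul, ZeroAtInftyContinuousMap.smul_apply]
  -- continuity of `t ↦ T t m`
  have Tcont : ∀ m, Continuous (fun t => T t m) := by
    intro m
    rw [continuous_iff_continuousAt]
    intro t₀
    have hev : (fun t => T t m) =ᶠ[nhds t₀] (fun t => φ (F t₀ m) t) := by
      filter_upwards [hFev t₀ m] with x hx
      exact dep x (F x m) (F t₀ m) (by rw [hFt, hx])
    exact ((map_continuous (φ (F t₀ m))).continuousAt).congr hev.symm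
  -- boundedness
  have Tbdd : ∀ t m, ‖T t m‖ ≤ ‖φ‖ * ‖m‖ := by
    intro t m
    calc ‖T t m‖ = ‖(φ (F t m)).toBCF t‖ := rfl
      _ ≤ ‖(φ (F t m)).toBCF‖ := BoundedContinuousFunction.norm_coe_le_norm _ t
      _ = ‖φ (F t m)‖ := rfl
      _ ≤ ‖φ‖ * ‖F t m‖ := φ.le_opNorm _
      _ ≤ ‖φ‖ * ‖m‖ := mul_le_mul_of_nonneg_left (hFnorm t m) (norm_nonneg φ)
  -- the coefficients
  refine ⟨fun r l k s => BoundedContinuousFunction.ofNormedAddCommGroup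
      (fun t => T t (Matrix.single s r (1 : ℂ)) k l)
      (by
        have : Continuous fun t => T t (Matrix.single s r (1 : ℂ)) :=
          Tcont _
        exact ((continuous_apply l).comp ((continuous_apply k).comp this)))
      (‖φ‖ * ‖Matrix.single s r (1 : ℂ)‖)
      (fun t => (Matrix.norm_entry_le_entrywise_sup_norm _).trans (Tbdd t _)), ?_⟩
  intro f t
  rw [hT t f]
  -- expand f t in the standard basis
  conv_lhs => rw [Matrix.matrix_eq_sum_single (f t)]
  have Texp : T t (∑ s, ∑ r, Matrix.single s r (f t s r)) =
      ∑ s, ∑ r, f t s r • T t (Matrix.single s r (1 : ℂ)) := by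
    have hsum : ∀ (m : Finset (Fin n × Fin n)) ,
        T t (∑ p ∈ m, Matrix.single p.1 p.2 (f t p.1 p.2)) =
          ∑ p ∈ m, f t p.1 p.2 • T t (Matrix.single p.1 p.2 (1 : ℂ)) := by
      intro m
      induction m using Finset.induction with
      | empty =>
          have h0 : T t 0 = 0 := by
            have := Tsmul t 0 0
            simpa using this
          simpa using h0
      | insert _ _ hp ih =>
          rw [Finset.sum_insert hp, Finset.sum_insert hp, Tadd, ih]
          rw [← Tsmul, Matrix.smul_single, smul_eq_mul, mul_one]
    have := hsum Finset.univ
    simp only [Fintype.sum_prod_type] at this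
    exact this
  rw [Texp]
  -- compute the right-hand side
  simp only [BoundedContinuousFunction.coe_ofNormedAddCommGroup, stdBasis_conj_aux]
  ext a b
  simp only [Matrix.sum_apply, Matrix.smul_apply, Matrix.single, Matrix.of_apply,
    smul_eq_mul, mul_ite, mul_one, mul_zero, ite_and]
  simp only [Finset.sum_ite_eq, Finset.sum_ite_eq', Finset.mem_univ, if_true,
    Finset.sum_ite_irrel, Finset.sum_const_zero]
  rw [Finset.sum_comm]
  exact Finset.sum_congr rfl fun s _ => Finset.sum_congr rfl fun r _ => mul_comm _ _
end
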